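/- Let π:(X,T)→(Y,T) be a factor map between minimal systems, and let π_u be the restriction of π to uX. Then: (i) π_u is continuous for the τ^[d]-topologies on uX and uY; (ii) π_u is a τ^[d]-homeomorphism if and only if π is a proximal factor. -/

import Mathlib

attribute [local instance] Ultrafilter.mul Ultrafilter.semigroup

/-- Nonempty subsets of `[d]`: the starred coordinates of the `d`-cube. -/
def CubeStar (d : ℕ) : Type := {ε : Finset (Fin d) // ε.Nonempty}

/-- The starred face cube group of order `d` of the group `T`: the subgroup of
`T^{2^d-1}` generated by the elements `g^{(α)}`, `α` an upper facet. -/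
def faceGroupStar (T : Type*) [Group T] (d : ℕ) : Subgroup (CubeStar d → T) :=
  Subgroup.closure {f | ∃ t : T, ∃ j : Fin d, f = fun ε => if j ∈ ε.1 then t else 1}

/-- The action of an ultrafilter `p ∈ βT` on a point of a compact Hausdorff
`T`-space: `p x = lim_{t → p} t x`. -/
noncomputable def uact {T : Type*} [Group T] {X : Type*} [TopologicalSpace X]
    [MulAction T X] (p : Ultrafilter T) (x : X) : X :=
  @Filter.lim X _ ⟨x⟩ (Filter.map (fun t : T => t • x) (p : Filter T))

/-- The circle operation `u^[d]_* ∘ B` for the face group acting diagonally on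
`X^{2^d-1}`: `z ∈ u∘B` iff there are nets `f_λ ∈ F^[d]_*` with `f_λ → u^[d]_*`
(coordinatewise in `βT`) and `b_λ ∈ B` with `f_λ b_λ → z`. -/
def circOp {T : Type*} [Group T] {X : Type*} [TopologicalSpace X] [MulAction T X]
    (d : ℕ) (u : Ultrafilter T) (B : Set (CubeStar d → X)) : Set (CubeStar d → X) :=
  {z | (((fun _ => u) : CubeStar d → Ultrafilter T), z) ∈ closure
    {q : (CubeStar d → Ultrafilter T) × (CubeStar d → X) |
      ∃ f ∈ faceGroupStar T d, ∃ b ∈ B,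
        q = (fun ε => (pure (f ε) : Ultrafilter T), fun ε => f ε • b ε)}}

/-- The `τ^[d]`-closure of `A ⊆ uX`:
`cl(A) = {x ∈ uX : x^[d]_* ∈ u^[d]_*(u^[d]_* ∘ Δ^[d]_*(A))}`. -/
noncomputable def clTau {T : Type*} [Group T] {X : Type*} [TopologicalSpace X]
    [MulAction T X] (d : ℕ) (u : Ultrafilter T) (A : Set X) : Set X :=
  {x | x ∈ uact u '' (Set.univ : Set X) ∧
    (fun _ : CubeStar d => x) ∈
      (fun z : CubeStar d → X => fun ε => uact u (z ε)) ''
        circOp d u ((fun a : X => fun _ : CubeStar d => a) '' A)}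

/-- `M` is a minimal left ideal of the semigroup `βT`. -/
def IsMinimalLeftIdeal {T : Type*} [Group T] (M : Set (Ultrafilter T)) : Prop :=
  (M.Nonempty ∧ ∀ p ∈ M, ∀ q : Ultrafilter T, q * p ∈ M) ∧
    ∀ N ⊆ M, (N.Nonempty ∧ ∀ p ∈ N, ∀ q : Ultrafilter T, q * p ∈ N) → N = M

/-- Proximality of a pair: the orbit closure of `(x, y)` meets the diagonal. -/
def IsProximal (T : Type*) [Group T] {X : Type*} [TopologicalSpace X] [MulAction T X]
    (x y : X) : Prop :=
  ∃ z : X, (z, z) ∈ closure {q : X × X | ∃ t : T, q = (t • x, t • y)}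

/-!
A proximal pair is collapsed by some `p ∈ βT`; since `M (p u) = M` by minimality, some `q ∈ M`
satisfies `q p u = u`, so `π` is injective on `uX` exactly when its fibres are proximal.
The circle operation commutes with `π` because `π` induces a continuous, hence closed, map
between the compact spaces `(βT)^{2^d-1} × X^{2^d-1}` and `(βT)^{2^d-1} × Y^{2^d-1}` in which
it is a closure; applying `u` coordinatewise then shows that `π` maps `τ^[d]`-closures into
`τ^[d]`-closures, with equality once `π` is bijective on `uX`.
-/

section

open Filter Topology Set Function

variable {T : Type*} [Group T] {X Y : Type*} [MulAction T X]

section UltrafilterAction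

variable [TopologicalSpace X] [CompactSpace X]

theorem tendsto_smul_uact (p : Ultrafilter T) (x : X) :
    Tendsto (fun t : T => t • x) p (𝓝 (uact p x)) := by
  obtain ⟨a, -, ha⟩ := isCompact_univ.ultrafilter_le_nhds (p.map (· • x)) (by simp)
  exact le_nhds_lim ⟨a, ha⟩

theorem uact_eq_of_tendsto [T2Space X] {p : Ultrafilter T} {x a : X}
    (h : Tendsto (fun t : T => t • x) p (𝓝 a)) : uact p x = a :=
  tendsto_nhds_unique (tendsto_smul_uact p x) h

theorem uact_mul [T2Space X] (hcX : ∀ t : T, Continuous fun x : X => t • x)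
    (p q : Ultrafilter T) (x : X) : uact (p * q) x = uact p (uact q x) := by
  refine uact_eq_of_tendsto (tendsto_nhds.mpr fun s hs hmem => ?_)
  refine (Ultrafilter.eventually_mul p q (· • x ∈ s)).mpr ?_
  filter_upwards [(tendsto_smul_uact p (uact q x)).eventually (hs.eventually_mem hmem)] with a ha
  filter_upwards [(((hcX a).tendsto _).comp (tendsto_smul_uact q x)).eventually
    (hs.eventually_mem ha)] with b hb
  rwa [mul_smul]

theorem map_uact [TopologicalSpace Y] [CompactSpace Y] [T2Space Y] [MulAction T Y] {π : X → Y}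
    (hπc : Continuous π) (hπeq : ∀ t : T, ∀ x : X, π (t • x) = t • π x)
    (p : Ultrafilter T) (x : X) : π (uact p x) = uact p (π x) := by
  refine (uact_eq_of_tendsto ?_).symm
  simpa only [comp_def, hπeq] using (hπc.tendsto _).comp (tendsto_smul_uact p x)

end UltrafilterAction

section Proximal

variable [TopologicalSpace X]

theorem exists_ultrafilter_tendsto_of_mem_closure_range {α : Type*} {f : α → X} {z : X}
    (h : z ∈ closure (range f)) : ∃ p : Ultrafilter α, Tendsto f p (𝓝 z) := by
  obtain ⟨G, hG, hGz⟩ := mem_closure_iff_ultrafilter.mp h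
  rw [← image_univ] at hG
  refine ⟨Ultrafilter.ofComapInfPrincipal hG, ?_⟩
  rwa [Tendsto, ← Ultrafilter.coe_map, Ultrafilter.ofComapInfPrincipal_eq_of_map]

theorem IsProximal.exists_uact_eq [CompactSpace X] [T2Space X] {x x' : X}
    (h : IsProximal T x x') : ∃ p : Ultrafilter T, uact p x = uact p x' := by
  obtain ⟨z, hz⟩ := h
  have horbit :
      {q : X × X | ∃ t : T, q = (t • x, t • x')} = range fun t : T => (t • x, t • x') :=
    ext fun _ => exists_congr fun _ => eq_comm
  rw [horbit] at hz
  obtain ⟨p, hp⟩ := exists_ultrafilter_tendsto_of_mem_closure_range hz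
  obtain ⟨hpx, hpx'⟩ := Prod.tendsto_iff _ _ |>.mp hp
  exact ⟨p, (uact_eq_of_tendsto hpx).trans (uact_eq_of_tendsto hpx').symm⟩

theorem isProximal_of_uact_eq [CompactSpace X] [T2Space X] {p : Ultrafilter T} {x x' : X}
    (h : uact p x = uact p x') : IsProximal T x x' := by
  have hlim : Tendsto (fun t : T => (t • x, t • x')) p (𝓝 (uact p x, uact p x)) :=
    (tendsto_smul_uact p x).prodMk_nhds (h ▸ tendsto_smul_uact p x')
  exact ⟨uact p x, mem_closure_of_tendsto hlim (Eventually.of_forall fun t => ⟨t, rfl⟩)⟩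

end Proximal

theorem IsMinimalLeftIdeal.exists_mul_eq {M : Set (Ultrafilter T)} (hM : IsMinimalLeftIdeal M)
    {r u : Ultrafilter T} (hr : r ∈ M) (hu : u ∈ M) : ∃ q ∈ M, q * r = u := by
  have hMr : (fun q => q * r) '' M = M := by
    refine hM.2 _ ?_ ⟨⟨r * r, r, hr, rfl⟩, ?_⟩
    · rintro _ ⟨q, hq, rfl⟩
      exact hM.1.2 r hr q
    · rintro _ ⟨q, hq, rfl⟩ q'
      exact ⟨q' * q, hM.1.2 q hq q', mul_assoc _ _ _⟩
  rwa [← hMr] at hu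

section ProximalFactor

variable [TopologicalSpace X] [CompactSpace X] [T2Space X] {π : X → Y}

theorem injOn_uact_range_of_isProximal (hcX : ∀ t : T, Continuous fun x : X => t • x)
    {M : Set (Ultrafilter T)} (hM : IsMinimalLeftIdeal M) {u : Ultrafilter T} (hu : u ∈ M)
    (hprox : ∀ x x' : X, π x = π x' → IsProximal T x x') :
    InjOn π (uact u '' univ) := by
  rintro _ ⟨x, -, rfl⟩ _ ⟨x', -, rfl⟩ hπ
  obtain ⟨p, hp⟩ := (hprox _ _ hπ).exists_uact_eq
  obtain ⟨q, -, hq⟩ := hM.exists_mul_eq (hM.1.2 u hu p) hu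
  calc uact u x = uact q (uact p (uact u x)) := by
        rw [← uact_mul hcX, ← uact_mul hcX, mul_assoc, hq]
    _ = uact q (uact p (uact u x')) := by rw [hp]
    _ = uact u x' := by rw [← uact_mul hcX, ← uact_mul hcX, mul_assoc, hq]

variable [TopologicalSpace Y] [CompactSpace Y] [T2Space Y] [MulAction T Y]

theorem isProximal_of_injOn_uact_range (hπc : Continuous π)
    (hπeq : ∀ t : T, ∀ x : X, π (t • x) = t • π x) {u : Ultrafilter T}
    (hinj : InjOn π (uact u '' univ))
    {x x' : X} (h : π x = π x') : IsProximal T x x' :=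
  isProximal_of_uact_eq <| hinj (mem_image_of_mem _ trivial) (mem_image_of_mem _ trivial) <| by
    rw [map_uact hπc hπeq, map_uact hπc hπeq, h]

theorem bijOn_uact_range_of_isProximal (hπc : Continuous π) (hπs : Surjective π)
    (hπeq : ∀ t : T, ∀ x : X, π (t • x) = t • π x)
    (hcX : ∀ t : T, Continuous fun x : X => t • x)
    {M : Set (Ultrafilter T)} (hM : IsMinimalLeftIdeal M) {u : Ultrafilter T} (hu : u ∈ M)
    (hprox : ∀ x x' : X, π x = π x' → IsProximal T x x') :
    BijOn π (uact u '' univ) (uact u '' univ) := by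
  refine ⟨?_, injOn_uact_range_of_isProximal hcX hM hu hprox, ?_⟩
  · rintro _ ⟨x, -, rfl⟩
    exact ⟨π x, trivial, (map_uact hπc hπeq u x).symm⟩
  · rintro _ ⟨y, -, rfl⟩
    obtain ⟨x, rfl⟩ := hπs y
    exact ⟨uact u x, mem_image_of_mem _ trivial, map_uact hπc hπeq u x⟩

end ProximalFactor

def faceOrbitGraph (T : Type*) [Group T] [MulAction T X] (d : ℕ) (B : Set (CubeStar d → X)) :
    Set ((CubeStar d → Ultrafilter T) × (CubeStar d → X)) :=
  {q | ∃ f ∈ faceGroupStar T d, ∃ b ∈ B,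
    q = (fun ε => (pure (f ε) : Ultrafilter T), fun ε => f ε • b ε)}

theorem mem_circOp_iff [TopologicalSpace X] {d : ℕ} {u : Ultrafilter T}
    {B : Set (CubeStar d → X)} {z : CubeStar d → X} :
    z ∈ circOp d u B ↔ (const _ u, z) ∈ closure (faceOrbitGraph T d B) :=
  Iff.rfl

theorem image_diagonal_image {ι : Type*} (π : X → Y) (A : Set X) :
    (fun a : Y => fun _ : ι => a) '' (π '' A) =
      (π ∘ ·) '' ((fun a : X => fun _ : ι => a) '' A) := by
  simp only [image_image]
  rfl

section Factor

variable [MulAction T Y] {π : X → Y}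

theorem image_faceOrbitGraph (hπeq : ∀ t : T, ∀ x : X, π (t • x) = t • π x) (d : ℕ)
    (B : Set (CubeStar d → X)) :
    Prod.map id (π ∘ ·) '' faceOrbitGraph T d B = faceOrbitGraph T d ((π ∘ ·) '' B) := by
  ext q
  constructor
  · rintro ⟨_, ⟨f, hf, b, hb, rfl⟩, rfl⟩
    exact ⟨f, hf, π ∘ b, mem_image_of_mem _ hb, by simp [comp_def, hπeq]⟩
  · rintro ⟨f, hf, _, ⟨b, hb, rfl⟩, rfl⟩
    exact ⟨_, ⟨f, hf, b, hb, rfl⟩, by simp [comp_def, hπeq]⟩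

variable [TopologicalSpace X] [TopologicalSpace Y]

theorem circOp_image [CompactSpace X] [T2Space Y] (hπc : Continuous π)
    (hπeq : ∀ t : T, ∀ x : X, π (t • x) = t • π x) (d : ℕ) (u : Ultrafilter T)
    (B : Set (CubeStar d → X)) :
    circOp d u ((π ∘ ·) '' B) = (π ∘ ·) '' circOp d u B := by
  have hΦ : Continuous (Prod.map id (π ∘ ·) :
      (CubeStar d → Ultrafilter T) × (CubeStar d → X) → _ × (CubeStar d → Y)) :=
    continuous_id.prodMap (continuous_pi fun ε => hπc.comp (continuous_apply ε))
  ext w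
  rw [mem_circOp_iff, ← image_faceOrbitGraph hπeq,
    hΦ.isClosedMap.closure_image_eq_of_continuous hΦ]
  constructor
  · rintro ⟨⟨P, z⟩, hz, hPz⟩
    obtain ⟨rfl, rfl⟩ := Prod.mk.inj hPz
    exact ⟨z, hz, rfl⟩
  · rintro ⟨z, hz, rfl⟩
    exact ⟨_, hz, rfl⟩

variable [CompactSpace X] [CompactSpace Y] [T2Space Y]

theorem image_clTau_subset (hπc : Continuous π)
    (hπeq : ∀ t : T, ∀ x : X, π (t • x) = t • π x) (d : ℕ) (u : Ultrafilter T)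
    (A : Set X) : π '' clTau d u A ⊆ clTau d u (π '' A) := by
  rintro _ ⟨_, ⟨⟨x, -, rfl⟩, z, hz, hzx⟩, rfl⟩
  refine ⟨⟨π x, trivial, (map_uact hπc hπeq u x).symm⟩, π ∘ z, ?_,
    funext fun ε => ?_⟩
  · rw [image_diagonal_image, circOp_image hπc hπeq]
    exact mem_image_of_mem _ hz
  · rw [← congrFun hzx ε]
    exact (map_uact hπc hπeq u (z ε)).symm

theorem clTau_image_subset_image_clTau (hπc : Continuous π)
    (hπeq : ∀ t : T, ∀ x : X, π (t • x) = t • π x) {d : ℕ} {u : Ultrafilter T}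
    (hbij : BijOn π (uact u '' univ) (uact u '' univ)) (A : Set X) :
    clTau d u (π '' A) ⊆ π '' clTau d u A := by
  rintro y ⟨hy, w, hw, hwy⟩
  rw [image_diagonal_image, circOp_image hπc hπeq] at hw
  obtain ⟨z, hz, rfl⟩ := hw
  obtain ⟨x, hx, rfl⟩ := hbij.surjOn hy
  refine ⟨x, ⟨hx, z, hz, funext fun ε => ?_⟩, rfl⟩
  refine hbij.injOn (mem_image_of_mem _ trivial) hx ?_
  rw [map_uact hπc hπeq]
  exact congrFun hwy ε

end Factor

end

theorem factor_restriction_tau_d_continuous_and_homeo_iff_proximal_general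
    {T : Type*} [Group T]
    {X : Type*} [TopologicalSpace X] [CompactSpace X] [T2Space X] [MulAction T X]
    {Y : Type*} [TopologicalSpace Y] [CompactSpace Y] [T2Space Y] [MulAction T Y]
    (hcX : ∀ t : T, Continuous fun x : X => t • x)
    (π : X → Y) (hπc : Continuous π) (hπs : Function.Surjective π)
    (hπeq : ∀ t : T, ∀ x : X, π (t • x) = t • π x)
    (d : ℕ) (M : Set (Ultrafilter T)) (hM : IsMinimalLeftIdeal M)
    (u : Ultrafilter T) (hu : u ∈ M) :
    (∀ A : Set X, A ⊆ uact u '' Set.univ →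
        π '' clTau d u A ⊆ clTau d u (π '' A)) ∧
    ((Set.BijOn π (uact u '' (Set.univ : Set X)) (uact u '' (Set.univ : Set Y)) ∧
        ∀ A : Set X, A ⊆ uact u '' Set.univ →
          π '' clTau d u A = clTau d u (π '' A)) ↔
      ∀ x x' : X, π x = π x' → IsProximal T x x') := by
  refine ⟨fun A _ => image_clTau_subset hπc hπeq d u A, fun h => ?_, fun hprox => ?_⟩
  · exact fun x x' => isProximal_of_injOn_uact_range hπc hπeq h.1.injOn
  · have hbij := bijOn_uact_range_of_isProximal hπc hπs hπeq hcX hM hu hprox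
    exact ⟨hbij, fun A _ => (image_clTau_subset hπc hπeq d u A).antisymm
      (clTau_image_subset_image_clTau hπc hπeq hbij A)⟩

/-- For a factor map `π` between minimal systems, the restriction `π_u` of `π` to
`uX` is `τ^[d]`-continuous; and it is a `τ^[d]`-homeomorphism onto `uY` iff `π` is
a proximal factor. -/
theorem factor_restriction_tau_d_continuous_and_homeo_iff_proximal
    {T : Type*} [Group T]
    {X : Type*} [TopologicalSpace X] [CompactSpace X] [T2Space X] [MulAction T X]
    {Y : Type*} [TopologicalSpace Y] [CompactSpace Y] [T2Space Y] [MulAction T Y]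
    (hcX : ∀ t : T, Continuous fun x : X => t • x)
    (hcY : ∀ t : T, Continuous fun y : Y => t • y)
    (hminX : ∀ x : X, Dense {x' : X | ∃ t : T, x' = t • x})
    (hminY : ∀ y : Y, Dense {y' : Y | ∃ t : T, y' = t • y})
    (π : X → Y) (hπc : Continuous π) (hπs : Function.Surjective π)
    (hπeq : ∀ t : T, ∀ x : X, π (t • x) = t • π x)
    (d : ℕ) (M : Set (Ultrafilter T)) (hM : IsMinimalLeftIdeal M)
    (u : Ultrafilter T) (hu : u ∈ M) (hidem : u * u = u) :
    (∀ A : Set X, A ⊆ uact u '' Set.univ →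
        π '' clTau d u A ⊆ clTau d u (π '' A)) ∧
    ((Set.BijOn π (uact u '' (Set.univ : Set X)) (uact u '' (Set.univ : Set Y)) ∧
        ∀ A : Set X, A ⊆ uact u '' Set.univ →
          π '' clTau d u A = clTau d u (π '' A)) ↔
      ∀ x x' : X, π x = π x' → IsProximal T x x') :=
  factor_restriction_tau_d_continuous_and_homeo_iff_proximal_general hcX π hπc hπs hπeq d M hM u hu
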